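/- Let n ∈ ℕ, Γ a subgroup of the permutations of Fin n, and Fβ ⊆ (Fin n → ℝ). Let (Fω)_{ω ∈ C} be a family of subsets of Fin n → ℝ indexed by a type C, pairwise disjoint, with union equal to Fβ. Let mβ, mω ∈ ℕ with mβ ≤ mω ≤ n; let πβ, πω be permutations of Fin n with (πβ • z) k = (πω • z) k for all z : Fin n → ℝ and all k < mβ; let φβ ∈ Γ and ψ ∈ Γ with ψ • Fβ = Fβ, and set φω = φβ * ψ (so φω • x = φβ • (ψ • x)). Define σβ(x) = (πβ • (φβ • x))|mβ and σω(x) = (πω • (φω • x))|mω. Assume: for every x ∈ Fβ and ξ ∈ Γ with σβ(x) = σβ(ξ • x), also ξ • x ∈ Fβ; and for every ω ∈ C, x ∈ Fω and ξ ∈ Γ with σω(x) = σω(ξ • x), also ξ • x ∈ Fω. Then for every x̃ ∈ Fβ satisfying σβ(x̃) ⪰ σβ(γ • x̃) for all γ ∈ Γ, there is exactly one ω ∈ C for which there exists ξ ∈ Γ with ξ • x̃ ∈ Fω and σω(ξ • x̃) ⪰ σω(γ • (ξ • x̃)) for all γ ∈ Γ. -/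

import Mathlib

/-- Action of a permutation of `Fin n` on vectors `x : Fin n → ℝ`:
`(γ • x) i = x (γ⁻¹ i)`. -/
def pact {n : ℕ} (γ : Equiv.Perm (Fin n)) (x : Fin n → ℝ) : Fin n → ℝ :=
  fun i => x (γ⁻¹ i)

/-- Lexicographic order `u ⪰ v` on `Fin m → ℝ`. -/
def lexGe {m : ℕ} (u v : Fin m → ℝ) : Prop :=
  u = v ∨ ∃ k : Fin m, (∀ i : Fin m, i < k → u i = v i) ∧ v k < u k

/-- Restriction of `z : Fin n → ℝ` to its first `m` coordinates. -/
def restr {n : ℕ} (m : ℕ) (h : m ≤ n) (z : Fin n → ℝ) : Fin m → ℝ :=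
  fun k => z (Fin.castLE h k)

/-!
Choose `ξ ∈ Γ` making `σω(ξ • x̃)` lexicographically maximal on the orbit `Γ • x̃`. Since
`σβ(ψ • y)` is the length-`mβ` prefix of `σω(y)`, the maximality of `σβ(x̃)` and of
`σω(ξ • x̃)` squeeze `σβ(ψ • ξ • x̃)` to `σβ(x̃)`, so (C4) at the node puts `ψ • ξ • x̃`, hence
`ξ • x̃`, in `Fβ` and thus in some child. Two maximal points of one orbit have the same
`σω`-value, so (C4) at a child carries one into the child of the other, and disjointness
forces the children to coincide.
-/

lemma pact_mul {n : ℕ} (a b : Equiv.Perm (Fin n)) (x : Fin n → ℝ) :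
    pact (a * b) x = pact a (pact b x) := by
  funext i
  simp [pact]

lemma pact_inv_pact {n : ℕ} (a : Equiv.Perm (Fin n)) (x : Fin n → ℝ) :
    pact a⁻¹ (pact a x) = x := by
  rw [← pact_mul, inv_mul_cancel]
  rfl

lemma pact_injective {n : ℕ} (a : Equiv.Perm (Fin n)) : Function.Injective (pact a) :=
  fun x y h => by simpa only [pact_inv_pact] using congrArg (pact a⁻¹) h

lemma mem_of_pact_mem {n : ℕ} {F : Set (Fin n → ℝ)} {a : Equiv.Perm (Fin n)}
    (hF : pact a '' F = F) {y : Fin n → ℝ} (hy : pact a y ∈ F) : y ∈ F := by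
  rw [← hF] at hy
  obtain ⟨z, hz, hza⟩ := hy
  rwa [← pact_injective a hza]

lemma lexGe_iff_toLex_le {m : ℕ} (u v : Fin m → ℝ) : lexGe u v ↔ toLex v ≤ toLex u := by
  rw [le_iff_lt_or_eq, eq_comm, EmbeddingLike.apply_eq_iff_eq, or_comm]
  refine or_congr Iff.rfl ⟨?_, ?_⟩
  · rintro ⟨k, hk, hlt⟩
    exact ⟨k, fun i hi => (hk i hi).symm, hlt⟩
  · rintro ⟨k, hk, hlt⟩
    exact ⟨k, fun i hi => (hk i hi).symm, hlt⟩

lemma lexGe_antisymm {m : ℕ} {u v : Fin m → ℝ} (huv : lexGe u v) (hvu : lexGe v u) : u = v :=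
  toLex.injective <|
    le_antisymm ((lexGe_iff_toLex_le v u).mp hvu) ((lexGe_iff_toLex_le u v).mp huv)

lemma lexGe_restr {a b : ℕ} (h : a ≤ b) {u v : Fin b → ℝ} (huv : lexGe u v) :
    lexGe (restr a h u) (restr a h v) := by
  rcases huv with rfl | ⟨k, hk, hlt⟩
  · exact Or.inl rfl
  by_cases hka : (k : ℕ) < a
  · exact Or.inr ⟨⟨k, hka⟩, fun i hi => hk _ hi, hlt⟩
  · exact Or.inl <| funext fun i =>
      hk _ (show (i : ℕ) < k from lt_of_lt_of_le i.2 (not_lt.mp hka))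

section OrbitLexMax

variable {n m : ℕ} (Γ : Subgroup (Equiv.Perm (Fin n))) (σ : (Fin n → ℝ) → (Fin m → ℝ))

/-- The paper's symmetry handling constraints for `y`. -/
def IsOrbitLexMax (y : Fin n → ℝ) : Prop :=
  ∀ γ ∈ Γ, lexGe (σ y) (σ (pact γ y))

variable {Γ σ}

lemma exists_isOrbitLexMax (x : Fin n → ℝ) : ∃ ξ ∈ Γ, IsOrbitLexMax Γ σ (pact ξ x) := by
  obtain ⟨ξ, hξ⟩ := Finite.exists_max fun γ : Γ => toLex (σ (pact γ x))
  refine ⟨ξ, ξ.2, fun γ hγ => ?_⟩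
  rw [lexGe_iff_toLex_le, ← pact_mul]
  exact hξ ⟨γ * ξ, mul_mem hγ ξ.2⟩

lemma IsOrbitLexMax.lexGe {x : Fin n → ℝ} {ξ γ : Equiv.Perm (Fin n)}
    (hmax : IsOrbitLexMax Γ σ (pact ξ x)) (hξ : ξ ∈ Γ) (hγ : γ ∈ Γ) :
    lexGe (σ (pact ξ x)) (σ (pact γ x)) := by
  simpa only [← pact_mul, inv_mul_cancel_right] using hmax (γ * ξ⁻¹) (mul_mem hγ (inv_mem hξ))

lemma IsOrbitLexMax.eq {x : Fin n → ℝ} {ξ₁ ξ₂ : Equiv.Perm (Fin n)}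
    (h₁ : IsOrbitLexMax Γ σ (pact ξ₁ x)) (h₂ : IsOrbitLexMax Γ σ (pact ξ₂ x))
    (hξ₁ : ξ₁ ∈ Γ) (hξ₂ : ξ₂ ∈ Γ) : σ (pact ξ₁ x) = σ (pact ξ₂ x) :=
  lexGe_antisymm (h₁.lexGe hξ₁ hξ₂) (h₂.lexGe hξ₂ hξ₁)

lemma IsOrbitLexMax.mem {F : Set (Fin n → ℝ)}
    (hF : ∀ y ∈ F, ∀ ξ ∈ Γ, σ y = σ (pact ξ y) → pact ξ y ∈ F)
    {x : Fin n → ℝ} {ξ₁ ξ₂ : Equiv.Perm (Fin n)}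
    (h₁ : IsOrbitLexMax Γ σ (pact ξ₁ x)) (h₂ : IsOrbitLexMax Γ σ (pact ξ₂ x))
    (hξ₁ : ξ₁ ∈ Γ) (hξ₂ : ξ₂ ∈ Γ) (hx₁ : pact ξ₁ x ∈ F) : pact ξ₂ x ∈ F := by
  have hmove : pact (ξ₂ * ξ₁⁻¹) (pact ξ₁ x) = pact ξ₂ x := by
    rw [← pact_mul, inv_mul_cancel_right]
  rw [← hmove]
  exact hF _ hx₁ _ (mul_mem hξ₂ (inv_mem hξ₁)) (hmove ▸ h₁.eq h₂ hξ₁ hξ₂)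

lemma IsOrbitLexMax.eq_of_restr {mβ : ℕ} (h : mβ ≤ m) {σβ : (Fin n → ℝ) → (Fin mβ → ℝ)}
    {ψ ξ : Equiv.Perm (Fin n)} (hprefix : ∀ y, σβ (pact ψ y) = restr mβ h (σ y))
    {x : Fin n → ℝ} (hξmax : IsOrbitLexMax Γ σ (pact ξ x)) (hxβ : IsOrbitLexMax Γ σβ x)
    (hψ : ψ ∈ Γ) (hξ : ξ ∈ Γ) : σβ x = σβ (pact (ψ * ξ) x) := by
  refine lexGe_antisymm (hxβ _ (mul_mem hψ hξ)) ?_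
  have key := lexGe_restr h (hξmax.lexGe hξ (inv_mem hψ))
  rwa [← hprefix, ← hprefix, ← pact_mul ψ ψ⁻¹, mul_inv_cancel] at key

end OrbitLexMax

theorem stmt4_general (n : ℕ) (Γ : Subgroup (Equiv.Perm (Fin n)))
    (Fβ : Set (Fin n → ℝ)) (C : Type) (Fω : C → Set (Fin n → ℝ))
    (hdisj : ∀ ω ω' : C, ω ≠ ω' → Disjoint (Fω ω) (Fω ω'))
    (hunion : (⋃ ω : C, Fω ω) = Fβ)
    (mβ mω : ℕ) (h1 : mβ ≤ mω) (h2 : mω ≤ n)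
    (πβ πω : Equiv.Perm (Fin n))
    (hπ : ∀ z : Fin n → ℝ, ∀ k : Fin n, (k : ℕ) < mβ → pact πβ z k = pact πω z k)
    (φβ ψ : Equiv.Perm (Fin n)) (hψ : ψ ∈ Γ)
    (hψF : pact ψ '' Fβ = Fβ)
    (φω : Equiv.Perm (Fin n)) (hφω : φω = φβ * ψ)
    (hC4β : ∀ x ∈ Fβ, ∀ ξ ∈ Γ,
      restr mβ (h1.trans h2) (pact πβ (pact φβ x)) =
        restr mβ (h1.trans h2) (pact πβ (pact φβ (pact ξ x))) →
      pact ξ x ∈ Fβ)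
    (hC4ω : ∀ ω : C, ∀ x ∈ Fω ω, ∀ ξ ∈ Γ,
      restr mω h2 (pact πω (pact φω x)) =
        restr mω h2 (pact πω (pact φω (pact ξ x))) →
      pact ξ x ∈ Fω ω) :
    ∀ xr ∈ Fβ,
      (∀ γ ∈ Γ,
        lexGe (restr mβ (h1.trans h2) (pact πβ (pact φβ xr)))
          (restr mβ (h1.trans h2) (pact πβ (pact φβ (pact γ xr))))) →
      ∃! ω : C, ∃ ξ ∈ Γ, pact ξ xr ∈ Fω ω ∧
        ∀ γ ∈ Γ,
          lexGe (restr mω h2 (pact πω (pact φω (pact ξ xr))))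
            (restr mω h2 (pact πω (pact φω (pact γ (pact ξ xr))))) := by
  intro xr hxr hmax
  set σβ := fun x => restr mβ (h1.trans h2) (pact πβ (pact φβ x))
  set σω := fun x => restr mω h2 (pact πω (pact φω x))
  have hprefix : ∀ y, σβ (pact ψ y) = restr mβ h1 (σω y) := fun y => funext fun k => by
    simp only [σβ, σω, restr, hφω, pact_mul]
    exact hπ _ _ k.2
  obtain ⟨ξ, hξ, hξmax⟩ := exists_isOrbitLexMax (Γ := Γ) (σ := σω) xr
  have hψξ : pact ψ (pact ξ xr) ∈ Fβ := by
    rw [← pact_mul]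
    exact hC4β xr hxr _ (mul_mem hψ hξ) (hξmax.eq_of_restr h1 hprefix hmax hψ hξ)
  obtain ⟨ω, hω⟩ := Set.mem_iUnion.mp (hunion ▸ mem_of_pact_mem hψF hψξ)
  refine ⟨ω, ⟨ξ, hξ, hω, hξmax⟩, ?_⟩
  rintro ω' ⟨ξ', hξ', hω', hξ'max⟩
  by_contra hne
  exact Set.disjoint_left.mp (hdisj ω' ω hne)
    (IsOrbitLexMax.mem (hC4ω ω') hξ'max hξmax hξ' hξ hω') hω

/-- The single-step lemma behind the paper's main theorem: if the children's
regions `Fω` partition the node's region `Fβ`, the symmetry prehandling data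
of the node and its children are related as in (C1)–(C3), and (C4) holds at
the node and at all children, then every `xr ∈ Fβ` satisfying the node's
symmetry handling constraints has a symmetric counterpart, satisfying the
children's symmetry handling constraints, in exactly one child. -/
theorem stmt4 (n : ℕ) (Γ : Subgroup (Equiv.Perm (Fin n)))
    (Fβ : Set (Fin n → ℝ)) (C : Type) (Fω : C → Set (Fin n → ℝ))
    (hdisj : ∀ ω ω' : C, ω ≠ ω' → Disjoint (Fω ω) (Fω ω'))
    (hunion : (⋃ ω : C, Fω ω) = Fβ)
    (mβ mω : ℕ) (h1 : mβ ≤ mω) (h2 : mω ≤ n)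
    (πβ πω : Equiv.Perm (Fin n))
    (hπ : ∀ z : Fin n → ℝ, ∀ k : Fin n, (k : ℕ) < mβ → pact πβ z k = pact πω z k)
    (φβ ψ : Equiv.Perm (Fin n)) (hφβ : φβ ∈ Γ) (hψ : ψ ∈ Γ)
    (hψF : pact ψ '' Fβ = Fβ)
    (φω : Equiv.Perm (Fin n)) (hφω : φω = φβ * ψ)
    (hC4β : ∀ x ∈ Fβ, ∀ ξ ∈ Γ,
      restr mβ (h1.trans h2) (pact πβ (pact φβ x)) =
        restr mβ (h1.trans h2) (pact πβ (pact φβ (pact ξ x))) →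
      pact ξ x ∈ Fβ)
    (hC4ω : ∀ ω : C, ∀ x ∈ Fω ω, ∀ ξ ∈ Γ,
      restr mω h2 (pact πω (pact φω x)) =
        restr mω h2 (pact πω (pact φω (pact ξ x))) →
      pact ξ x ∈ Fω ω) :
    ∀ xr ∈ Fβ,
      (∀ γ ∈ Γ,
        lexGe (restr mβ (h1.trans h2) (pact πβ (pact φβ xr)))
          (restr mβ (h1.trans h2) (pact πβ (pact φβ (pact γ xr))))) →
      ∃! ω : C, ∃ ξ ∈ Γ, pact ξ xr ∈ Fω ω ∧
        ∀ γ ∈ Γ,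
          lexGe (restr mω h2 (pact πω (pact φω (pact ξ xr))))
            (restr mω h2 (pact πω (pact φω (pact γ (pact ξ xr))))) :=
  stmt4_general n Γ Fβ C Fω hdisj hunion mβ mω h1 h2 πβ πω hπ φβ ψ hψ hψF φω hφω hC4β hC4ω
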